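/- arXiv:2312.17490 — 2 statements merged into one kernel-verified Lean document; each statement's English description precedes it below -/
import Mathlib

section
/- Suppose α solves the curve diffusion flow with generalised Neumann boundary conditions inside the cone on [0,T). Then the total curvature ∫ k ds is constant in t: d/dt ∫ k ds = 0 for all t ∈ [0,T). Equivalently, the rotation number ω = (2π)⁻¹ ∫ k ds is constant under the flow. -/
open MeasureTheory Real Set

noncomputable section

/-- The arclength derivative of a scalar quantity along the curve `γ`. -/
def aderiv (γ : ℝ → EuclideanSpace ℝ (Fin 2)) (f : ℝ → ℝ) : ℝ → ℝ :=
  fun u => ‖deriv γ u‖⁻¹ * deriv f u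

/-- The arclength derivative of a vector quantity along the curve `γ`. -/
def aderivV (γ : ℝ → EuclideanSpace ℝ (Fin 2)) (f : ℝ → EuclideanSpace ℝ (Fin 2)) :
    ℝ → EuclideanSpace ℝ (Fin 2) :=
  fun u => ‖deriv γ u‖⁻¹ • deriv f u

/-- The unit tangent vector. -/
def tangentVec (γ : ℝ → EuclideanSpace ℝ (Fin 2)) : ℝ → EuclideanSpace ℝ (Fin 2) :=
  fun u => ‖deriv γ u‖⁻¹ • deriv γ u

/-- The (outward) unit normal: the clockwise rotation of the unit tangent. -/
def normalVec (γ : ℝ → EuclideanSpace ℝ (Fin 2)) : ℝ → EuclideanSpace ℝ (Fin 2) :=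
  fun u => (WithLp.equiv 2 (Fin 2 → ℝ)).symm ![tangentVec γ u 1, -(tangentVec γ u 0)]

/-- The scalar curvature `k = -⟨α_ss, ν⟩`. -/
def curvature (γ : ℝ → EuclideanSpace ℝ (Fin 2)) : ℝ → ℝ :=
  fun u => -(inner ℝ (aderivV γ (aderivV γ γ) u) (normalVec γ u) : ℝ)

/-- The `n`-th arclength derivative of the curvature, `k_{s^n}`. -/
def curvDeriv (γ : ℝ → EuclideanSpace ℝ (Fin 2)) (n : ℕ) : ℝ → ℝ :=
  (aderiv γ)^[n] (curvature γ)

/-- `∫ f ds` along the curve. -/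
def curveIntegralDs (γ : ℝ → EuclideanSpace ℝ (Fin 2)) (f : ℝ → ℝ) : ℝ :=
  ∫ u in (-1:ℝ)..1, f u * ‖deriv γ u‖

/-- The length `L = ∫ ds`. -/
def clength (γ : ℝ → EuclideanSpace ℝ (Fin 2)) : ℝ :=
  ∫ u in (-1:ℝ)..1, ‖deriv γ u‖

/-- The average curvature `k̄ = L⁻¹ ∫ k ds`. -/
def avgCurv (γ : ℝ → EuclideanSpace ℝ (Fin 2)) : ℝ :=
  (clength γ)⁻¹ * curveIntegralDs γ (curvature γ)

/-- The oscillation of curvature `K_osc = L ∫ (k - k̄)² ds`. -/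
def Kosc (γ : ℝ → EuclideanSpace ℝ (Fin 2)) : ℝ :=
  clength γ * curveIntegralDs γ (fun u => (curvature γ u - avgCurv γ) ^ 2)

/-- The area enclosed by the curve and the cone, `A = ½ ∫ ⟨α, ν⟩ ds`. -/
def enclosedArea (γ : ℝ → EuclideanSpace ℝ (Fin 2)) : ℝ :=
  (1 / 2) * curveIntegralDs γ (fun u => (inner ℝ (γ u) (normalVec γ u) : ℝ))

/-- The unit vector in direction `θ`. -/
def coneDir (θ : ℝ) : EuclideanSpace ℝ (Fin 2) :=
  (WithLp.equiv 2 (Fin 2 → ℝ)).symm ![Real.cos θ, Real.sin θ]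

/-- `α` solves the curve diffusion flow `∂α/∂t = k_ss ν` with generalised Neumann
boundary conditions inside the cone with angles `θ₂ < θ₁`, for times `t ∈ J`. -/
structure IsCDFlow (θ₁ θ₂ : ℝ) (J : Set ℝ) (α : ℝ → ℝ → EuclideanSpace ℝ (Fin 2)) : Prop where
  angle_nonneg : 0 ≤ θ₂
  angle_lt : θ₂ < θ₁
  angle_pi : θ₁ < Real.pi
  smooth : ContDiff ℝ (⊤ : ℕ∞) (fun p : ℝ × ℝ => α p.1 p.2)
  regular : ∀ t ∈ J, ∀ u ∈ Icc (-1:ℝ) 1, deriv (fun u => α u t) u ≠ 0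
  flow : ∀ t ∈ J, ∀ u ∈ Icc (-1:ℝ) 1,
    HasDerivAt (fun t => α u t)
      (curvDeriv (fun u => α u t) 2 u • normalVec (fun u => α u t) u) t
  bdry_left : ∀ t ∈ J, ∃ ρ : ℝ, 0 < ρ ∧ α (-1) t = ρ • coneDir θ₁
  bdry_right : ∀ t ∈ J, ∃ ρ : ℝ, 0 < ρ ∧ α 1 t = ρ • coneDir θ₂
  interior_cone : ∀ t ∈ J, ∀ u ∈ Ioo (-1:ℝ) 1,
    ∃ ρ θ : ℝ, 0 < ρ ∧ θ₂ < θ ∧ θ < θ₁ ∧ α u t = ρ • coneDir θ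
  neumann_left : ∀ t ∈ J,
    (inner ℝ (normalVec (fun u => α u t) (-1)) (coneDir (θ₁ + Real.pi / 2)) : ℝ) = 0
  neumann_right : ∀ t ∈ J,
    (inner ℝ (normalVec (fun u => α u t) 1) (coneDir (θ₂ + Real.pi / 2)) : ℝ) = 0
  noflux : ∀ t ∈ J,
    curvDeriv (fun u => α u t) 1 (-1) = 0 ∧ curvDeriv (fun u => α u t) 1 1 = 0




open scoped Interval

abbrev E2 := EuclideanSpace ℝ (Fin 2)

def pu {F : Type*} [NormedAddCommGroup F] [NormedSpace ℝ F] (f : ℝ × ℝ → F) (p : ℝ × ℝ) : F :=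
  fderiv ℝ f p (1, 0)

def pt {F : Type*} [NormedAddCommGroup F] [NormedSpace ℝ F] (f : ℝ × ℝ → F) (p : ℝ × ℝ) : F :=
  fderiv ℝ f p (0, 1)

variable {F G : Type*} [NormedAddCommGroup F] [NormedSpace ℝ F]
  [NormedAddCommGroup G] [NormedSpace ℝ G]

theorem contDiff_pu {f : ℝ × ℝ → F} (hf : ContDiff ℝ (⊤ : ℕ∞) f) : ContDiff ℝ (⊤ : ℕ∞) (pu f) :=
  (hf.fderiv_right (by simp)).clm_apply contDiff_const

theorem contDiff_pt {f : ℝ × ℝ → F} (hf : ContDiff ℝ (⊤ : ℕ∞) f) : ContDiff ℝ (⊤ : ℕ∞) (pt f) :=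
  (hf.fderiv_right (by simp)).clm_apply contDiff_const

theorem hasDerivAt_pu {f : ℝ × ℝ → F} (hf : ContDiff ℝ (⊤ : ℕ∞) f) (u t : ℝ) :
    HasDerivAt (fun u' => f (u', t)) (pu f (u, t)) u := by
  have h1 : HasDerivAt (fun u' : ℝ => (u', t)) ((1 : ℝ), (0 : ℝ)) u :=
    (hasDerivAt_id u).prodMk (hasDerivAt_const u t)
  have h2 := (hf.differentiable (by simp) (u, t)).hasFDerivAt
  exact h2.comp_hasDerivAt u h1

theorem hasDerivAt_pt {f : ℝ × ℝ → F} (hf : ContDiff ℝ (⊤ : ℕ∞) f) (u t : ℝ) :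
    HasDerivAt (fun t' => f (u, t')) (pt f (u, t)) t := by
  have h1 : HasDerivAt (fun t' : ℝ => (u, t')) ((0 : ℝ), (1 : ℝ)) t :=
    (hasDerivAt_const t u).prodMk (hasDerivAt_id t)
  have h2 := (hf.differentiable (by simp) (u, t)).hasFDerivAt
  exact h2.comp_hasDerivAt t h1

theorem pt_pu_comm {f : ℝ × ℝ → F} (hf : ContDiff ℝ (⊤ : ℕ∞) f) (p : ℝ × ℝ) :
    pt (pu f) p = pu (pt f) p := by
  have hd : Differentiable ℝ (fderiv ℝ f) :=
    (hf.fderiv_right (m := (⊤ : ℕ∞)) ((by simp))).differentiable (by simp)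
  have hsymm := second_derivative_symmetric (f := f) (f' := fderiv ℝ f)
    (f'' := fderiv ℝ (fderiv ℝ f) p)
    (fun y => (hf.differentiable (by simp) y).hasFDerivAt) (hd p).hasFDerivAt
  have e1 : ∀ v w : ℝ × ℝ, fderiv ℝ (fun q => fderiv ℝ f q v) p w
      = fderiv ℝ (fderiv ℝ f) p w v := by
    intro v w
    rw [fderiv_clm_apply (hd p) (differentiableAt_const v)]
    simp
  show fderiv ℝ (fun q => fderiv ℝ f q (1,0)) p (0,1)
      = fderiv ℝ (fun q => fderiv ℝ f q (0,1)) p (1,0)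
  rw [e1, e1]
  exact hsymm _ _

theorem pu_clm {f : ℝ × ℝ → F} (L : F →L[ℝ] G) (hf : ContDiff ℝ (⊤ : ℕ∞) f) (p : ℝ × ℝ) :
    pu (fun q => L (f q)) p = L (pu f p) := by
  unfold pu
  have h : HasFDerivAt (fun q => L (f q)) (L.comp (fderiv ℝ f p)) p :=
    L.hasFDerivAt.comp p (hf.differentiable (by simp) p).hasFDerivAt
  rw [h.fderiv]
  rfl

theorem pt_clm {f : ℝ × ℝ → F} (L : F →L[ℝ] G) (hf : ContDiff ℝ (⊤ : ℕ∞) f) (p : ℝ × ℝ) :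
    pt (fun q => L (f q)) p = L (pt f p) := by
  unfold pt
  have h : HasFDerivAt (fun q => L (f q)) (L.comp (fderiv ℝ f p)) p :=
    L.hasFDerivAt.comp p (hf.differentiable (by simp) p).hasFDerivAt
  rw [h.fderiv]
  rfl

section geom
variable (A : ℝ × ℝ → E2)

def Xc : ℝ × ℝ → ℝ := fun p => A p 0
def Yc : ℝ × ℝ → ℝ := fun p => A p 1
def xu : ℝ × ℝ → ℝ := pu (Xc A)
def yu : ℝ × ℝ → ℝ := pu (Yc A)
def xuu : ℝ × ℝ → ℝ := pu (xu A)
def yuu : ℝ × ℝ → ℝ := pu (yu A)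
def xut : ℝ × ℝ → ℝ := pt (xu A)
def yut : ℝ × ℝ → ℝ := pt (yu A)
def Qq : ℝ × ℝ → ℝ := fun p => xu A p ^ 2 + yu A p ^ 2
def Dd : ℝ × ℝ → ℝ := fun p => xu A p * yuu A p - yu A p * xuu A p
def Ee : ℝ × ℝ → ℝ := fun p => xu A p * yut A p - yu A p * xut A p
def Ff : ℝ × ℝ → ℝ := fun p => Dd A p / Qq A p
def Hh : ℝ × ℝ → ℝ := fun p => Ee A p / Qq A p
def Ft : ℝ × ℝ → ℝ :=
  fun p => (pt (Dd A) p * Qq A p - Dd A p * pt (Qq A) p) / Qq A p ^ 2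

variable {A}

theorem Xc_eq : Xc A = fun q => EuclideanSpace.proj (0 : Fin 2) (A q) := rfl
theorem Yc_eq : Yc A = fun q => EuclideanSpace.proj (1 : Fin 2) (A q) := rfl

variable (hA : ContDiff ℝ (⊤ : ℕ∞) A)
include hA

theorem contDiff_Xc : ContDiff ℝ (⊤ : ℕ∞) (Xc A) := by
  have := (EuclideanSpace.proj (0 : Fin 2)).contDiff.comp hA
  exact this
theorem contDiff_Yc : ContDiff ℝ (⊤ : ℕ∞) (Yc A) := by
  have := (EuclideanSpace.proj (1 : Fin 2)).contDiff.comp hA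
  exact this
theorem contDiff_xu : ContDiff ℝ (⊤ : ℕ∞) (xu A) := contDiff_pu (contDiff_Xc hA)
theorem contDiff_yu : ContDiff ℝ (⊤ : ℕ∞) (yu A) := contDiff_pu (contDiff_Yc hA)
theorem contDiff_xuu : ContDiff ℝ (⊤ : ℕ∞) (xuu A) := contDiff_pu (contDiff_xu hA)
theorem contDiff_yuu : ContDiff ℝ (⊤ : ℕ∞) (yuu A) := contDiff_pu (contDiff_yu hA)
theorem contDiff_xut : ContDiff ℝ (⊤ : ℕ∞) (xut A) := contDiff_pt (contDiff_xu hA)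
theorem contDiff_yut : ContDiff ℝ (⊤ : ℕ∞) (yut A) := contDiff_pt (contDiff_yu hA)
theorem contDiff_Qq : ContDiff ℝ (⊤ : ℕ∞) (Qq A) :=
  ((contDiff_xu hA).pow 2).add ((contDiff_yu hA).pow 2)
theorem contDiff_Dd : ContDiff ℝ (⊤ : ℕ∞) (Dd A) :=
  ((contDiff_xu hA).mul (contDiff_yuu hA)).sub ((contDiff_yu hA).mul (contDiff_xuu hA))
theorem contDiff_Ee : ContDiff ℝ (⊤ : ℕ∞) (Ee A) :=
  ((contDiff_xu hA).mul (contDiff_yut hA)).sub ((contDiff_yu hA).mul (contDiff_xut hA))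

theorem xu_eq (p : ℝ × ℝ) : xu A p = pu A p 0 := by
  show pu (Xc A) p = _
  rw [Xc_eq, pu_clm (EuclideanSpace.proj (0 : Fin 2)) hA]
  rfl

theorem yu_eq (p : ℝ × ℝ) : yu A p = pu A p 1 := by
  show pu (Yc A) p = _
  rw [Yc_eq, pu_clm (EuclideanSpace.proj (1 : Fin 2)) hA]
  rfl

theorem xuu_eq (p : ℝ × ℝ) : xuu A p = pu (pu A) p 0 := by
  have : xu A = fun q => EuclideanSpace.proj (0 : Fin 2) (pu A q) := funext fun q => xu_eq hA q
  show pu (xu A) p = _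
  rw [this, pu_clm (EuclideanSpace.proj (0 : Fin 2)) (contDiff_pu hA)]
  rfl

theorem yuu_eq (p : ℝ × ℝ) : yuu A p = pu (pu A) p 1 := by
  have : yu A = fun q => EuclideanSpace.proj (1 : Fin 2) (pu A q) := funext fun q => yu_eq hA q
  show pu (yu A) p = _
  rw [this, pu_clm (EuclideanSpace.proj (1 : Fin 2)) (contDiff_pu hA)]
  rfl

omit hA in
theorem norm_sq_E2 (v : E2) : ‖v‖ ^ 2 = v 0 ^ 2 + v 1 ^ 2 := by
  rw [EuclideanSpace.norm_eq]
  rw [Real.sq_sqrt (by positivity)]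
  simp [Fin.sum_univ_two, sq_abs]

theorem Qq_eq_norm_sq (p : ℝ × ℝ) : Qq A p = ‖pu A p‖ ^ 2 := by
  rw [norm_sq_E2, Qq, xu_eq hA, yu_eq hA]

theorem deriv_curve (u t : ℝ) : deriv (fun u' => A (u', t)) u = pu A (u, t) :=
  (hasDerivAt_pu hA u t).deriv

theorem norm_deriv_eq (u t : ℝ) :
    ‖deriv (fun u' => A (u', t)) u‖ = sqrt (Qq A (u, t)) := by
  rw [deriv_curve hA, show Qq A (u,t) = ‖pu A (u,t)‖^2 from Qq_eq_norm_sq hA _,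
    Real.sqrt_sq (norm_nonneg _)]

theorem tangent_eq (t : ℝ) :
    tangentVec (fun u' => A (u', t)) = fun u' => (sqrt (Qq A (u', t)))⁻¹ • pu A (u', t) := by
  funext u'
  show ‖deriv (fun u' => A (u', t)) u'‖⁻¹ • deriv (fun u' => A (u', t)) u' = _
  rw [norm_deriv_eq hA, deriv_curve hA]

theorem curv_mul_norm {u t : ℝ} (hQ : Qq A (u, t) ≠ 0) :
    curvature (fun u' => A (u', t)) u * ‖deriv (fun u' => A (u', t)) u‖ = Ff A (u, t) := by
  have hQpos : 0 < Qq A (u, t) := lt_of_le_of_ne (by unfold Qq; positivity) (Ne.symm hQ)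
  set γ : ℝ → E2 := fun u' => A (u', t) with hγdef
  set w : ℝ := sqrt (Qq A (u, t)) with hwdef
  have hwpos : 0 < w := Real.sqrt_pos.2 hQpos
  have hw2 : w ^ 2 = Qq A (u, t) := Real.sq_sqrt hQpos.le
  have hT : aderivV γ γ = fun u' => (sqrt (Qq A (u', t)))⁻¹ • pu A (u', t) :=
    tangent_eq hA t
  have hq' : HasDerivAt (fun u' => Qq A (u', t)) (pu (Qq A) (u, t)) u :=
    hasDerivAt_pu (contDiff_Qq hA) u t
  have hsq : HasDerivAt (fun u' => sqrt (Qq A (u', t))) (pu (Qq A) (u, t) / (2 * w)) u :=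
    hq'.sqrt hQ
  set m : ℝ := -(pu (Qq A) (u, t) / (2 * w)) / w ^ 2 with hmdef
  have hinv : HasDerivAt (fun u' => (sqrt (Qq A (u', t)))⁻¹) m u := hsq.inv hwpos.ne'
  have hV : HasDerivAt (fun u' => pu A (u', t)) (pu (pu A) (u, t)) u :=
    hasDerivAt_pu (contDiff_pu hA) u t
  have hTd : HasDerivAt (aderivV γ γ) (w⁻¹ • pu (pu A) (u, t) + m • pu A (u, t)) u := by
    rw [hT]; exact hinv.smul hV
  set V : E2 := pu A (u, t) with hVdef
  set Vu : E2 := pu (pu A) (u, t) with hVudef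
  have hx : xu A (u, t) = V 0 := xu_eq hA _
  have hy : yu A (u, t) = V 1 := yu_eq hA _
  have hxx : xuu A (u, t) = Vu 0 := xuu_eq hA _
  have hyy : yuu A (u, t) = Vu 1 := yuu_eq hA _
  have hnu : normalVec γ u
      = (WithLp.equiv 2 (Fin 2 → ℝ)).symm ![w⁻¹ * V 1, -(w⁻¹ * V 0)] := by
    show (WithLp.equiv 2 (Fin 2 → ℝ)).symm ![tangentVec γ u 1, -(tangentVec γ u 0)] = _
    rw [tangent_eq hA t]
    congr 1
  have hcurv : curvature γ u
      = -(inner ℝ ((w⁻¹ : ℝ) • (w⁻¹ • Vu + m • V)) (normalVec γ u) : ℝ) := by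
    show -(inner ℝ (‖deriv γ u‖⁻¹ • deriv (aderivV γ γ) u) (normalVec γ u) : ℝ) = _
    rw [norm_deriv_eq hA, hTd.deriv]
  rw [hcurv, hnu, norm_deriv_eq hA]
  have hF : Ff A (u, t) = (V 0 * Vu 1 - V 1 * Vu 0) / Qq A (u, t) := by
    unfold Ff Dd
    rw [hx, hy, hxx, hyy]
  rw [hF, ← hw2]
  have hinner : (inner ℝ ((w⁻¹ : ℝ) • (w⁻¹ • Vu + m • V))
      ((WithLp.equiv 2 (Fin 2 → ℝ)).symm ![w⁻¹ * V 1, -(w⁻¹ * V 0)]) : ℝ)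
      = (w⁻¹ * (w⁻¹ * Vu 0 + m * V 0)) * (w⁻¹ * V 1)
        + (w⁻¹ * (w⁻¹ * Vu 1 + m * V 1)) * (-(w⁻¹ * V 0)) := by
    simp [PiLp.inner_apply, Fin.sum_univ_two, WithLp.equiv_symm_apply, PiLp.toLp_apply, mul_comm]
    ring
  rw [hinner]
  rw [Real.sqrt_sq hwpos.le]
  field_simp
  ring


omit hA in
theorem inner_E2 (a b c d : ℝ) :
    (inner ℝ ((WithLp.equiv 2 (Fin 2 → ℝ)).symm ![a, b])
      ((WithLp.equiv 2 (Fin 2 → ℝ)).symm ![c, d]) : ℝ) = a * c + b * d := by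
  simp [PiLp.inner_apply, Fin.sum_univ_two, WithLp.equiv_symm_apply, PiLp.toLp_apply]
  ring

theorem normal_eq (u t : ℝ) : normalVec (fun u' => A (u', t)) u
    = (WithLp.equiv 2 (Fin 2 → ℝ)).symm
        ![(sqrt (Qq A (u, t)))⁻¹ * yu A (u, t), -((sqrt (Qq A (u, t)))⁻¹ * xu A (u, t))] := by
  show (WithLp.equiv 2 (Fin 2 → ℝ)).symm
      ![tangentVec (fun u' => A (u', t)) u 1, -(tangentVec (fun u' => A (u', t)) u 0)] = _
  rw [tangent_eq hA t, xu_eq hA, yu_eq hA]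
  congr 1

-- Leibniz expansions (via uniqueness of derivatives)
theorem pt_Dd (u t : ℝ) : pt (Dd A) (u, t)
    = (xut A (u, t) * yuu A (u, t) + xu A (u, t) * pu (yut A) (u, t))
      - (yut A (u, t) * xuu A (u, t) + yu A (u, t) * pu (xut A) (u, t)) := by
  have h1 := hasDerivAt_pt (contDiff_Dd hA) u t
  have hyuu : HasDerivAt (fun t' => yuu A (u, t')) (pu (yut A) (u, t)) t := by
    have := hasDerivAt_pt (contDiff_yuu hA) u t
    rwa [show pt (yuu A) (u, t) = pu (yut A) (u, t) from pt_pu_comm (contDiff_yu hA) (u, t)] at this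
  have hxuu : HasDerivAt (fun t' => xuu A (u, t')) (pu (xut A) (u, t)) t := by
    have := hasDerivAt_pt (contDiff_xuu hA) u t
    rwa [show pt (xuu A) (u, t) = pu (xut A) (u, t) from pt_pu_comm (contDiff_xu hA) (u, t)] at this
  have h2 : HasDerivAt (fun t' => Dd A (u, t'))
      ((xut A (u, t) * yuu A (u, t) + xu A (u, t) * pu (yut A) (u, t))
        - (yut A (u, t) * xuu A (u, t) + yu A (u, t) * pu (xut A) (u, t))) t :=
    ((hasDerivAt_pt (contDiff_xu hA) u t).mul hyuu).sub
      ((hasDerivAt_pt (contDiff_yu hA) u t).mul hxuu)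
  exact h1.unique h2

theorem pu_Ee (u t : ℝ) : pu (Ee A) (u, t)
    = (xuu A (u, t) * yut A (u, t) + xu A (u, t) * pu (yut A) (u, t))
      - (yuu A (u, t) * xut A (u, t) + yu A (u, t) * pu (xut A) (u, t)) := by
  have h1 := hasDerivAt_pu (contDiff_Ee hA) u t
  have h2 : HasDerivAt (fun u' => Ee A (u', t))
      ((xuu A (u, t) * yut A (u, t) + xu A (u, t) * pu (yut A) (u, t))
        - (yuu A (u, t) * xut A (u, t) + yu A (u, t) * pu (xut A) (u, t))) u :=
    ((hasDerivAt_pu (contDiff_xu hA) u t).mul (hasDerivAt_pu (contDiff_yut hA) u t)).sub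
      ((hasDerivAt_pu (contDiff_yu hA) u t).mul (hasDerivAt_pu (contDiff_xut hA) u t))
  exact h1.unique h2

theorem pt_Qq (u t : ℝ) : pt (Qq A) (u, t)
    = 2 * xu A (u, t) * xut A (u, t) + 2 * yu A (u, t) * yut A (u, t) := by
  have h1 := hasDerivAt_pt (contDiff_Qq hA) u t
  have h2 : HasDerivAt (fun t' => Qq A (u, t'))
      (2 * xu A (u, t) * xut A (u, t) + 2 * yu A (u, t) * yut A (u, t)) t := by
    have hx := hasDerivAt_pt (contDiff_xu hA) u t
    have hy := hasDerivAt_pt (contDiff_yu hA) u t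
    have := ((hx.mul hx).add (hy.mul hy))
    refine (((hx.mul hx).add (hy.mul hy)).congr_deriv ?_).congr_of_eventuallyEq
      (Filter.Eventually.of_forall fun t' => ?_)
    · unfold xut yut; ring
    · simp only [Qq, Pi.add_apply, Pi.mul_apply]; ring
  exact h1.unique h2

theorem pu_Qq (u t : ℝ) : pu (Qq A) (u, t)
    = 2 * xu A (u, t) * xuu A (u, t) + 2 * yu A (u, t) * yuu A (u, t) := by
  have h1 := hasDerivAt_pu (contDiff_Qq hA) u t
  have h2 : HasDerivAt (fun u' => Qq A (u', t))
      (2 * xu A (u, t) * xuu A (u, t) + 2 * yu A (u, t) * yuu A (u, t)) u := by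
    have hx := hasDerivAt_pu (contDiff_xu hA) u t
    have hy := hasDerivAt_pu (contDiff_yu hA) u t
    refine (((hx.mul hx).add (hy.mul hy)).congr_deriv ?_).congr_of_eventuallyEq
      (Filter.Eventually.of_forall fun u' => ?_)
    · unfold xuu yuu; ring
    · simp only [Qq, Pi.add_apply, Pi.mul_apply]; ring
  exact h1.unique h2

theorem Ft_eq_Hu {u t : ℝ} :
    Ft A (u, t) = (pu (Ee A) (u, t) * Qq A (u, t) - Ee A (u, t) * pu (Qq A) (u, t))
      / Qq A (u, t) ^ 2 := by
  unfold Ft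
  rw [pt_Dd hA, pu_Ee hA, pt_Qq hA, pu_Qq hA]
  unfold Dd Ee Qq
  ring_nf

theorem hasDerivAt_Ff_t {u t : ℝ} (hQ : Qq A (u, t) ≠ 0) :
    HasDerivAt (fun t' => Ff A (u, t')) (Ft A (u, t)) t :=
  (hasDerivAt_pt (contDiff_Dd hA) u t).div (hasDerivAt_pt (contDiff_Qq hA) u t) hQ

theorem hasDerivAt_Hh_u {u t : ℝ} (hQ : Qq A (u, t) ≠ 0) :
    HasDerivAt (fun u' => Hh A (u', t)) (Ft A (u, t)) u := by
  have h := (hasDerivAt_pu (contDiff_Ee hA) u t).div (hasDerivAt_pu (contDiff_Qq hA) u t) hQ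
  rw [Ft_eq_Hu hA]
  exact h

theorem continuousOn_Ft : ContinuousOn (Ft A) {p : ℝ × ℝ | Qq A p ≠ 0} := by
  apply ContinuousOn.div
  · exact (((contDiff_pt (contDiff_Dd hA)).continuous.mul
      (contDiff_Qq hA).continuous).sub
      ((contDiff_Dd hA).continuous.mul (contDiff_pt (contDiff_Qq hA)).continuous)).continuousOn
  · exact ((contDiff_Qq hA).continuous.pow 2).continuousOn
  · intro p hp; exact pow_ne_zero 2 hp

omit hA in
theorem det_aux {a b a' b' c s : ℝ} (h1 : a * c + b * s = 0) (h2 : a' * c + b' * s = 0)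
    (hcs : c ^ 2 + s ^ 2 = 1) : a * b' - b * a' = 0 := by
  linear_combination (b' * c - a' * s) * h1 - (b * c - a * s) * h2 - (a * b' - b * a') * hcs

omit hA in
theorem deriv_eq_zero_of_Ico {φ : ℝ → ℝ} {d t₀ T : ℝ} (hφ : HasDerivAt φ d t₀)
    (h0 : ∀ s ∈ Ico (0 : ℝ) T, φ s = 0) (ht : t₀ ∈ Ico (0 : ℝ) T) : d = 0 := by
  have h1 : HasDerivWithinAt φ d (Ici t₀) t₀ := hφ.hasDerivWithinAt
  have h2 : HasDerivWithinAt φ 0 (Ici t₀) t₀ := by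
    have hz : HasDerivWithinAt (fun _ : ℝ => (0 : ℝ)) 0 (Ici t₀) t₀ :=
      (hasDerivAt_const t₀ (0 : ℝ)).hasDerivWithinAt
    apply hz.congr_of_eventuallyEq
    · have hmem : Iio T ∈ nhdsWithin t₀ (Ici t₀) :=
        mem_nhdsWithin_of_mem_nhds (Iio_mem_nhds ht.2)
      filter_upwards [hmem, self_mem_nhdsWithin] with s hs hs'
      exact h0 s ⟨le_trans ht.1 hs', hs⟩
    · exact h0 t₀ ht
  have e1 : derivWithin φ (Ici t₀) t₀ = d := h1.derivWithin (uniqueDiffOn_Ici t₀ t₀ self_mem_Ici)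
  have e2 : derivWithin φ (Ici t₀) t₀ = 0 := h2.derivWithin (uniqueDiffOn_Ici t₀ t₀ self_mem_Ici)
  rw [← e1, e2]

theorem Ee_boundary {T θ : ℝ} {u₀ : ℝ}
    (hreg : ∀ t ∈ Ico (0 : ℝ) T, Qq A (u₀, t) ≠ 0)
    (hneu : ∀ t ∈ Ico (0 : ℝ) T,
      (inner ℝ (normalVec (fun u => A (u, t)) u₀) (coneDir (θ + Real.pi / 2)) : ℝ) = 0)
    {t₀ : ℝ} (ht₀ : t₀ ∈ Ico (0 : ℝ) T) : Ee A (u₀, t₀) = 0 := by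
  have hφ0 : ∀ t ∈ Ico (0 : ℝ) T,
      xu A (u₀, t) * cos θ + yu A (u₀, t) * sin θ = 0 := by
    intro t ht
    have hQ := hreg t ht
    have hQpos : 0 < Qq A (u₀, t) := lt_of_le_of_ne (by unfold Qq; positivity) (Ne.symm hQ)
    have hs : sqrt (Qq A (u₀, t)) ≠ 0 := Real.sqrt_ne_zero'.2 hQpos
    have hn := hneu t ht
    rw [normal_eq hA, show coneDir (θ + Real.pi / 2)
        = (WithLp.equiv 2 (Fin 2 → ℝ)).symm ![cos (θ + π / 2), sin (θ + π / 2)] from rfl,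
      inner_E2, Real.cos_add_pi_div_two, Real.sin_add_pi_div_two] at hn
    have : (sqrt (Qq A (u₀, t)))⁻¹ * (xu A (u₀, t) * cos θ + yu A (u₀, t) * sin θ) = 0 := by
      rw [← neg_eq_zero]; rw [← hn]; ring
    rcases mul_eq_zero.1 this with h | h
    · exact absurd h (inv_ne_zero hs)
    · exact h
  have hd : HasDerivAt (fun t => xu A (u₀, t) * cos θ + yu A (u₀, t) * sin θ)
      (xut A (u₀, t₀) * cos θ + yut A (u₀, t₀) * sin θ) t₀ :=
    ((hasDerivAt_pt (contDiff_xu hA) u₀ t₀).mul_const _).add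
      ((hasDerivAt_pt (contDiff_yu hA) u₀ t₀).mul_const _)
  have hd0 : xut A (u₀, t₀) * cos θ + yut A (u₀, t₀) * sin θ = 0 :=
    deriv_eq_zero_of_Ico hd hφ0 ht₀
  have := det_aux (hφ0 t₀ ht₀) hd0 (by rw [add_comm]; exact Real.sin_sq_add_cos_sq θ)
  exact this

end geom

/-- **The total curvature (hence the rotation number) is constant.** Under the curve
diffusion flow with generalised Neumann boundary conditions inside the cone,
`d/dt ∫ k ds = 0`, and `∫ k ds` (hence `ω = (2π)⁻¹ ∫ k ds`) is constant on `[0,T)`. -/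
theorem total_curvature_constant (θ₁ θ₂ T : ℝ)
    (α : ℝ → ℝ → EuclideanSpace ℝ (Fin 2))
    (hflow : IsCDFlow θ₁ θ₂ (Ico 0 T) α) :
    ∀ t ∈ Ico (0:ℝ) T,
      HasDerivAt (fun t => curveIntegralDs (fun u => α u t) (curvature (fun u => α u t))) 0 t ∧
      curveIntegralDs (fun u => α u t) (curvature (fun u => α u t)) =
        curveIntegralDs (fun u => α u 0) (curvature (fun u => α u 0)) := by
  have hA : ContDiff ℝ (⊤ : ℕ∞) (fun p : ℝ × ℝ => α p.1 p.2) := hflow.smooth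
  set A : ℝ × ℝ → EuclideanSpace ℝ (Fin 2) := fun p => α p.1 p.2 with hAdef
  have hreg : ∀ t ∈ Ico (0:ℝ) T, ∀ u ∈ Icc (-1:ℝ) 1, Qq A (u, t) ≠ 0 := by
    intro t ht u hu
    have hne : deriv (fun u' => A (u', t)) u ≠ 0 := hflow.regular t ht u hu
    rw [Qq_eq_norm_sq hA]
    refine pow_ne_zero 2 (norm_ne_zero_iff.2 ?_)
    rw [← deriv_curve hA u t]
    exact hne
  set g : ℝ → ℝ := fun t => curveIntegralDs (fun u => α u t) (curvature (fun u => α u t)) with hg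
  have key : ∀ t₀ ∈ Ico (0:ℝ) T, HasDerivAt g 0 t₀ := by
    intro t₀ ht₀
    have hU : IsOpen {p : ℝ × ℝ | Qq A p ≠ 0} :=
      isOpen_ne_fun (contDiff_Qq hA).continuous continuous_const
    have hK : IsCompact ((Icc (-1:ℝ) 1) ×ˢ ({t₀} : Set ℝ)) :=
      isCompact_Icc.prod isCompact_singleton
    have hKU : (Icc (-1:ℝ) 1) ×ˢ ({t₀} : Set ℝ) ⊆ {p : ℝ × ℝ | Qq A p ≠ 0} := by
      rintro ⟨u, t⟩ ⟨hu, ht⟩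
      rw [mem_singleton_iff] at ht; subst ht
      exact hreg _ ht₀ u hu
    obtain ⟨δ, hδpos, hδ⟩ := hK.exists_thickening_subset_open hU hKU
    have htube : ∀ u ∈ Icc (-1:ℝ) 1, ∀ t : ℝ, |t - t₀| < δ → Qq A (u, t) ≠ 0 := by
      intro u hu t ht
      refine hδ ?_
      rw [Metric.mem_thickening_iff]
      refine ⟨(u, t₀), ⟨hu, rfl⟩, ?_⟩
      rw [Prod.dist_eq]
      simpa [Real.dist_eq] using ht
    have hgF : ∀ t ∈ Metric.ball t₀ δ, g t = ∫ u in (-1:ℝ)..1, Ff A (u, t) := by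
      intro t ht
      show curveIntegralDs (fun u => α u t) (curvature (fun u => α u t)) = _
      unfold curveIntegralDs
      apply intervalIntegral.integral_congr
      intro u hu
      rw [uIcc_of_le (by norm_num : (-1:ℝ) ≤ 1)] at hu
      have hQ : Qq A (u, t) ≠ 0 := htube u hu t (by
        rw [← Real.dist_eq]; exact Metric.mem_ball.1 ht)
      exact curv_mul_norm hA hQ
    have hcont_slice : ∀ t : ℝ, (∀ u ∈ Icc (-1:ℝ) 1, Qq A (u, t) ≠ 0) →
        ContinuousOn (fun u => Ff A (u, t)) (Icc (-1:ℝ) 1) := by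
      intro t ht
      show ContinuousOn (fun u => Dd A (u, t) / Qq A (u, t)) (Icc (-1:ℝ) 1)
      refine ContinuousOn.div ?_ ?_ ht
      · exact ((contDiff_Dd hA).continuous.comp
          (continuous_id.prodMk continuous_const)).continuousOn
      · exact ((contDiff_Qq hA).continuous.comp
          (continuous_id.prodMk continuous_const)).continuousOn
    have hFt_slice : ∀ t : ℝ, (∀ u ∈ Icc (-1:ℝ) 1, Qq A (u, t) ≠ 0) →
        ContinuousOn (fun u => Ft A (u, t)) (Icc (-1:ℝ) 1) := by
      intro t ht
      refine (continuousOn_Ft hA).comp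
        ((continuous_id.prodMk continuous_const).continuousOn) ?_
      intro u hu
      exact ht u hu
    have hIoc_sub : Ι (-1:ℝ) 1 ⊆ Icc (-1:ℝ) 1 := by
      rw [uIoc_of_le (by norm_num : (-1:ℝ) ≤ 1)]
      exact Ioc_subset_Icc_self
    have hF_meas : ∀ᶠ t in nhds t₀,
        AEStronglyMeasurable (fun u => Ff A (u, t)) (volume.restrict (Ι (-1:ℝ) 1)) := by
      filter_upwards [Metric.ball_mem_nhds t₀ hδpos] with t ht
      refine ((hcont_slice t ?_).mono hIoc_sub).aestronglyMeasurable measurableSet_uIoc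
      intro u hu
      exact htube u hu t (by rw [← Real.dist_eq]; exact Metric.mem_ball.1 ht)
    have ht₀Icc : ∀ u ∈ Icc (-1:ℝ) 1, Qq A (u, t₀) ≠ 0 := hreg t₀ ht₀
    have hF_int : IntervalIntegrable (fun u => Ff A (u, t₀)) volume (-1:ℝ) 1 := by
      apply ContinuousOn.intervalIntegrable
      rw [uIcc_of_le (by norm_num : (-1:ℝ) ≤ 1)]
      exact hcont_slice t₀ ht₀Icc
    have hF'_meas : AEStronglyMeasurable (fun u => Ft A (u, t₀))
        (volume.restrict (Ι (-1:ℝ) 1)) :=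
      ((hFt_slice t₀ ht₀Icc).mono hIoc_sub).aestronglyMeasurable measurableSet_uIoc
    have hsub2 : (Icc (-1:ℝ) 1) ×ˢ (Icc (t₀ - δ/2) (t₀ + δ/2)) ⊆ {p : ℝ × ℝ | Qq A p ≠ 0} := by
      rintro ⟨u, t⟩ ⟨hu, ht⟩
      exact htube u hu t (by
        rw [abs_sub_lt_iff]
        constructor <;> [linarith [ht.2, half_lt_self hδpos]; linarith [ht.1, half_lt_self hδpos] ])
    obtain ⟨C, hC⟩ := (isCompact_Icc.prod isCompact_Icc).exists_bound_of_continuousOn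
      ((continuousOn_Ft hA).mono hsub2)
    have h_bound : ∀ᵐ u ∂(volume : Measure ℝ), u ∈ Ι (-1:ℝ) 1 →
        ∀ t ∈ Metric.ball t₀ (δ/2), ‖Ft A (u, t)‖ ≤ C := by
      refine Filter.Eventually.of_forall ?_
      intro u hu t ht
      have htd : |t - t₀| < δ/2 := by rw [← Real.dist_eq]; exact Metric.mem_ball.1 ht
      refine hC (u, t) ⟨hIoc_sub hu, ?_, ?_⟩
      · linarith [abs_lt.1 htd |>.1]
      · linarith [abs_lt.1 htd |>.2]
    have h_diff : ∀ᵐ u ∂(volume : Measure ℝ), u ∈ Ι (-1:ℝ) 1 →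
        ∀ t ∈ Metric.ball t₀ (δ/2), HasDerivAt (fun t' => Ff A (u, t')) (Ft A (u, t)) t := by
      refine Filter.Eventually.of_forall ?_
      intro u hu t ht
      have htd : |t - t₀| < δ/2 := by rw [← Real.dist_eq]; exact Metric.mem_ball.1 ht
      exact hasDerivAt_Ff_t hA (htube u (hIoc_sub hu) t (htd.trans (half_lt_self hδpos)))
    have hder := (intervalIntegral.hasDerivAt_integral_of_dominated_loc_of_deriv_le
      (F := fun t u => Ff A (u, t)) (F' := fun t u => Ft A (u, t)) (bound := fun _ => C)
      (Metric.ball_mem_nhds t₀ (half_pos hδpos)) hF_meas hF_int hF'_meas h_bound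
      intervalIntegrable_const h_diff).2
    have hFTC : (∫ u in (-1:ℝ)..1, Ft A (u, t₀)) = Hh A (1, t₀) - Hh A (-1, t₀) := by
      apply intervalIntegral.integral_eq_sub_of_hasDerivAt (f := fun u => Hh A (u, t₀))
        (f' := fun u => Ft A (u, t₀))
      · intro u hu
        rw [uIcc_of_le (by norm_num : (-1:ℝ) ≤ 1)] at hu
        exact hasDerivAt_Hh_u hA (ht₀Icc u hu)
      · apply ContinuousOn.intervalIntegrable
        rw [uIcc_of_le (by norm_num : (-1:ℝ) ≤ 1)]
        exact hFt_slice t₀ ht₀Icc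
    have hregR : ∀ t ∈ Ico (0:ℝ) T, Qq A ((1:ℝ), t) ≠ 0 := fun t ht =>
      hreg t ht 1 (by norm_num)
    have hregL : ∀ t ∈ Ico (0:ℝ) T, Qq A ((-1:ℝ), t) ≠ 0 := fun t ht =>
      hreg t ht (-1) (by norm_num)
    have hb1 : Ee A ((1:ℝ), t₀) = 0 :=
      Ee_boundary hA hregR (fun t ht => hflow.neumann_right t ht) ht₀
    have hbm1 : Ee A ((-1:ℝ), t₀) = 0 :=
      Ee_boundary hA hregL (fun t ht => hflow.neumann_left t ht) ht₀
    have hzero : (∫ u in (-1:ℝ)..1, Ft A (u, t₀)) = 0 := by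
      rw [hFTC]
      unfold Hh
      rw [hb1, hbm1]
      simp
    rw [hzero] at hder
    refine hder.congr_of_eventuallyEq ?_
    filter_upwards [Metric.ball_mem_nhds t₀ hδpos] with t ht using hgF t ht
  intro t ht
  refine ⟨key t ht, ?_⟩
  have hcont : ContinuousOn g (Icc 0 t) := fun s hs =>
    (key s ⟨hs.1, lt_of_le_of_lt hs.2 ht.2⟩).continuousAt.continuousWithinAt
  have hconst := constant_of_has_deriv_right_zero hcont (fun s hs =>
    (key s ⟨hs.1, lt_trans hs.2 ht.2⟩).hasDerivWithinAt)
  exact hconst t (right_mem_Icc.2 ht.1)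

end
end

section
/- Suppose α solves the curve diffusion flow with generalised Neumann boundary conditions inside the cone on [0,T). Then the enclosed area A(t) = ½ ∫ ⟨α, ν⟩ ds is constant in t: A(t) = A(0) for all t ∈ [0,T). -/
open MeasureTheory Real Set

noncomputable section

/-! ### Auxiliary material for `enclosed_area_constant` -/

open scoped ContDiff

lemma one_le_inf2 : (1 : WithTop ℕ∞) ≤ ∞ := by exact_mod_cast le_top
lemma two_le_inf2 : (2 : WithTop ℕ∞) ≤ ∞ := by
  have : ((2:ℕ∞) : WithTop ℕ∞) ≤ ((⊤:ℕ∞) : WithTop ℕ∞) := WithTop.coe_le_coe.2 le_top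
  simpa using this

/-- 2D cross product (z-component). -/
def cross2 (a b : EuclideanSpace ℝ (Fin 2)) : ℝ := a 0 * b 1 - a 1 * b 0

lemma inner_eq2 (a b : EuclideanSpace ℝ (Fin 2)) :
    (inner ℝ a b : ℝ) = a 0 * b 0 + a 1 * b 1 := by
  simp [PiLp.inner_apply, Fin.sum_univ_two, RCLike.inner_apply]; ring

lemma norm_sq_eq2 (a : EuclideanSpace ℝ (Fin 2)) : ‖a‖ ^ 2 = a 0 ^ 2 + a 1 ^ 2 := by
  rw [← real_inner_self_eq_norm_sq, inner_eq2]; ring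

lemma cross2_smul_left (c : ℝ) (a b : EuclideanSpace ℝ (Fin 2)) :
    cross2 (c • a) b = c * cross2 a b := by
  simp [cross2]; ring

lemma cross2_smul_right (c : ℝ) (a b : EuclideanSpace ℝ (Fin 2)) :
    cross2 a (c • b) = c * cross2 a b := by
  simp [cross2]; ring

lemma cross2_skew (a b : EuclideanSpace ℝ (Fin 2)) : cross2 a b = -cross2 b a := by
  simp [cross2]; ring

lemma continuous_apply2 {X : Type*} [TopologicalSpace X] {f : X → EuclideanSpace ℝ (Fin 2)}
    (hf : Continuous f) (i : Fin 2) : Continuous fun p => f p i :=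
  (EuclideanSpace.proj (𝕜 := ℝ) i).continuous.comp hf

lemma hasDerivAt_apply2 {f : ℝ → EuclideanSpace ℝ (Fin 2)} {f' : EuclideanSpace ℝ (Fin 2)} {x : ℝ}
    (hf : HasDerivAt f f' x) (i : Fin 2) : HasDerivAt (fun y => f y i) (f' i) x :=
  (EuclideanSpace.proj (𝕜 := ℝ) i).hasFDerivAt.comp_hasDerivAt x hf

lemma hasDerivAt_cross2 {f g : ℝ → EuclideanSpace ℝ (Fin 2)} {f' g' : EuclideanSpace ℝ (Fin 2)}
    {x : ℝ} (hf : HasDerivAt f f' x) (hg : HasDerivAt g g' x) :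
    HasDerivAt (fun y => cross2 (f y) (g y)) (cross2 f' (g x) + cross2 (f x) g') x := by
  have h := ((hasDerivAt_apply2 hf 0).mul (hasDerivAt_apply2 hg 1)).sub
    ((hasDerivAt_apply2 hf 1).mul (hasDerivAt_apply2 hg 0))
  refine HasDerivAt.congr_deriv h ?_
  simp [cross2]; ring

lemma continuous_cross2 {X : Type*} [TopologicalSpace X] {f g : X → EuclideanSpace ℝ (Fin 2)}
    (hf : Continuous f) (hg : Continuous g) : Continuous fun p => cross2 (f p) (g p) :=
  (((continuous_apply2 hf 0).mul (continuous_apply2 hg 1)).sub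
    ((continuous_apply2 hf 1).mul (continuous_apply2 hg 0)))

lemma coneDir_apply_zero (θ : ℝ) : coneDir θ 0 = Real.cos θ := rfl
lemma coneDir_apply_one (θ : ℝ) : coneDir θ 1 = Real.sin θ := rfl

lemma cross2_coneDir (θ : ℝ) (v : EuclideanSpace ℝ (Fin 2)) :
    cross2 (coneDir θ) v = (inner ℝ v (coneDir (θ + Real.pi / 2)) : ℝ) := by
  rw [inner_eq2]
  simp [cross2, coneDir_apply_zero, coneDir_apply_one, Real.cos_add_pi_div_two,
    Real.sin_add_pi_div_two]
  ring

lemma normalVec_apply_zero (γ : ℝ → EuclideanSpace ℝ (Fin 2)) (u : ℝ) :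
    normalVec γ u 0 = tangentVec γ u 1 := rfl

lemma normalVec_apply_one (γ : ℝ → EuclideanSpace ℝ (Fin 2)) (u : ℝ) :
    normalVec γ u 1 = -(tangentVec γ u 0) := rfl

lemma cross2_normal_deriv (γ : ℝ → EuclideanSpace ℝ (Fin 2)) (u : ℝ) (h : deriv γ u ≠ 0) :
    cross2 (normalVec γ u) (deriv γ u) = ‖deriv γ u‖ := by
  have hn : ‖deriv γ u‖ ≠ 0 := norm_ne_zero_iff.2 h
  have h2 := norm_sq_eq2 (deriv γ u)
  simp only [cross2, normalVec_apply_zero, normalVec_apply_one, tangentVec,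
    PiLp.smul_apply, smul_eq_mul]
  field_simp
  nlinarith [h2]

lemma inner_normal_mul_norm (γ : ℝ → EuclideanSpace ℝ (Fin 2)) (u : ℝ) (h : deriv γ u ≠ 0) :
    (inner ℝ (γ u) (normalVec γ u) : ℝ) * ‖deriv γ u‖ = cross2 (γ u) (deriv γ u) := by
  have hn : ‖deriv γ u‖ ≠ 0 := norm_ne_zero_iff.2 h
  rw [inner_eq2]
  simp only [cross2, normalVec_apply_zero, normalVec_apply_one, tangentVec,
    PiLp.smul_apply, smul_eq_mul]
  field_simp
  ring

lemma hasDerivAt_slice_fst {Φ : ℝ × ℝ → EuclideanSpace ℝ (Fin 2)} (hΦ : Differentiable ℝ Φ)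
    (u t : ℝ) : HasDerivAt (fun v => Φ (v, t)) (fderiv ℝ Φ (u, t) (1, 0)) u := by
  have hl : HasDerivAt (fun v : ℝ => (v, t)) ((1 : ℝ), (0 : ℝ)) u :=
    (hasDerivAt_id u).prodMk (hasDerivAt_const u t)
  exact (hΦ (u, t)).hasFDerivAt.comp_hasDerivAt u hl

lemma hasDerivAt_slice_snd {Φ : ℝ × ℝ → EuclideanSpace ℝ (Fin 2)} (hΦ : Differentiable ℝ Φ)
    (u t : ℝ) : HasDerivAt (fun τ => Φ (u, τ)) (fderiv ℝ Φ (u, t) (0, 1)) t := by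
  have hl : HasDerivAt (fun τ : ℝ => (u, τ)) ((0 : ℝ), (1 : ℝ)) t :=
    (hasDerivAt_const t u).prodMk (hasDerivAt_id t)
  exact (hΦ (u, t)).hasFDerivAt.comp_hasDerivAt t hl

lemma contDiff_fderiv_apply {Φ : ℝ × ℝ → EuclideanSpace ℝ (Fin 2)} (hΦ : ContDiff ℝ ∞ Φ)
    (v : ℝ × ℝ) : ContDiff ℝ ∞ (fun p => fderiv ℝ Φ p v) := by
  have h1 : ContDiff ℝ ∞ (fderiv ℝ Φ) := hΦ.fderiv_right (by simp)
  exact (ContinuousLinearMap.apply ℝ (EuclideanSpace ℝ (Fin 2)) v).contDiff.comp h1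

lemma fderiv_apply_eq {Φ : ℝ × ℝ → EuclideanSpace ℝ (Fin 2)} (hΦ : ContDiff ℝ ∞ Φ)
    (p v w : ℝ × ℝ) :
    fderiv ℝ (fun q => fderiv ℝ Φ q v) p w = fderiv ℝ (fderiv ℝ Φ) p w v := by
  have hd1 : ContDiff ℝ ∞ (fderiv ℝ Φ) := hΦ.fderiv_right (by simp)
  have hd : DifferentiableAt ℝ (fderiv ℝ Φ) p := (hd1.differentiable (by simp)) p
  rw [fderiv_clm_apply hd (differentiableAt_const v)]
  simp

lemma fderiv_swap2 {Φ : ℝ × ℝ → EuclideanSpace ℝ (Fin 2)} (hΦ : ContDiff ℝ ∞ Φ)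
    (p v w : ℝ × ℝ) :
    fderiv ℝ (fun q => fderiv ℝ Φ q v) p w = fderiv ℝ (fun q => fderiv ℝ Φ q w) p v := by
  rw [fderiv_apply_eq hΦ, fderiv_apply_eq hΦ]
  exact (hΦ.contDiffAt.isSymmSndFDerivAt (by simpa using two_le_inf2)).eq w v

lemma contDiffAt_deriv2 {F : Type*} [NormedAddCommGroup F] [NormedSpace ℝ F]
    {f : ℝ → F} {x : ℝ} (hf : ContDiffAt ℝ ∞ f x) : ContDiffAt ℝ ∞ (deriv f) x := by
  have h := hf.fderiv_right (m := ∞) (by simp)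
  have he : deriv f = fun y => (ContinuousLinearMap.apply ℝ F (1 : ℝ)) (fderiv ℝ f y) := by
    funext y; exact (fderiv_apply_one_eq_deriv).symm
  rw [he]
  exact (ContinuousLinearMap.apply ℝ F (1 : ℝ)).contDiff.contDiffAt.comp x h

lemma curvDerivOne_differentiableAt {γ : ℝ → EuclideanSpace ℝ (Fin 2)}
    (hγ : ContDiff ℝ ∞ γ) {u : ℝ} (hu : deriv γ u ≠ 0) :
    DifferentiableAt ℝ (curvDeriv γ 1) u := by
  have hγ' : ContDiffAt ℝ ∞ (deriv γ) u := contDiffAt_deriv2 hγ.contDiffAt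
  have hnorm : ContDiffAt ℝ ∞ (fun v => ‖deriv γ v‖) u := hγ'.norm ℝ hu
  have hninv : ContDiffAt ℝ ∞ (fun v => ‖deriv γ v‖⁻¹) u := hnorm.inv (norm_ne_zero_iff.2 hu)
  have hT : ContDiffAt ℝ ∞ (tangentVec γ) u := hninv.smul hγ'
  have hT' : ContDiffAt ℝ ∞ (deriv (tangentVec γ)) u := contDiffAt_deriv2 hT
  have hA2 : ContDiffAt ℝ ∞ (aderivV γ (tangentVec γ)) u := hninv.smul hT'
  have hT1 : ContDiffAt ℝ ∞ (fun v => tangentVec γ v 1) u :=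
    (EuclideanSpace.proj (𝕜 := ℝ) (1 : Fin 2)).contDiff.contDiffAt.comp u hT
  have hT0 : ContDiffAt ℝ ∞ (fun v => tangentVec γ v 0) u :=
    (EuclideanSpace.proj (𝕜 := ℝ) (0 : Fin 2)).contDiff.contDiffAt.comp u hT
  have hνeq : normalVec γ = fun v => tangentVec γ v 1 • (EuclideanSpace.single 0 (1 : ℝ)) -
      tangentVec γ v 0 • (EuclideanSpace.single 1 (1 : ℝ)) := by
    funext v
    refine PiLp.ext fun i => ?_
    fin_cases i <;>
      simp [normalVec, EuclideanSpace.single_apply, PiLp.smul_apply, PiLp.sub_apply]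
  have hν : ContDiffAt ℝ ∞ (normalVec γ) u := by
    rw [hνeq]
    exact (hT1.smul contDiffAt_const).sub (hT0.smul contDiffAt_const)
  have hcurv : ContDiffAt ℝ ∞ (curvature γ) u := by
    have : curvature γ =
        fun v => -(inner ℝ (aderivV γ (tangentVec γ) v) (normalVec γ v) : ℝ) := rfl
    rw [this]
    exact (ContDiffAt.inner ℝ hA2 hν).neg
  have hcurv' : ContDiffAt ℝ ∞ (deriv (curvature γ)) u := contDiffAt_deriv2 hcurv
  have heq : curvDeriv γ 1 = fun v => ‖deriv γ v‖⁻¹ * deriv (curvature γ) v := rfl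
  rw [heq]
  exact (hninv.mul hcurv').differentiableAt (by simp)

lemma interval_integral_swap2 {f : ℝ → ℝ → ℝ} (hf : Continuous fun p : ℝ × ℝ => f p.1 p.2)
    {a b c d : ℝ} (hab : a ≤ b) (hcd : c ≤ d) :
    ∫ u in a..b, ∫ s in c..d, f u s = ∫ s in c..d, ∫ u in a..b, f u s := by
  have hint : MeasureTheory.Integrable (Function.uncurry f)
      ((MeasureTheory.volume.restrict (Ioc a b)).prod
        (MeasureTheory.volume.restrict (Ioc c d))) := by
    rw [MeasureTheory.Measure.prod_restrict]
    have h1 : MeasureTheory.IntegrableOn (Function.uncurry f) (Icc a b ×ˢ Icc c d)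
        (MeasureTheory.volume.prod MeasureTheory.volume) := by
      have hc : IsCompact (Icc a b ×ˢ Icc c d) := isCompact_Icc.prod isCompact_Icc
      have := hf.continuousOn (s := Icc a b ×ˢ Icc c d)
      rw [← MeasureTheory.Measure.volume_eq_prod]
      exact this.integrableOn_compact hc
    exact (h1.mono_set (prod_mono Ioc_subset_Icc_self Ioc_subset_Icc_self))
  simp only [intervalIntegral.integral_of_le hab, intervalIntegral.integral_of_le hcd]
  exact MeasureTheory.integral_integral_swap hint
/-- **The enclosed area is constant.** Under the curve diffusion flow with generalised
Neumann boundary conditions inside the cone, the area `A(t) = ½ ∫ ⟨α, ν⟩ ds` enclosed by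
the curve and the cone satisfies `A(t) = A(0)` for all `t ∈ [0,T)`. -/
theorem enclosed_area_constant (θ₁ θ₂ T : ℝ)
    (α : ℝ → ℝ → EuclideanSpace ℝ (Fin 2))
    (hflow : IsCDFlow θ₁ θ₂ (Ico 0 T) α) :
    ∀ t ∈ Ico (0:ℝ) T,
      enclosedArea (fun u => α u t) = enclosedArea (fun u => α u 0) := by
  intro t ht
  obtain ⟨ht0, htT⟩ := ht
  have h0T : (0:ℝ) ∈ Ico (0:ℝ) T := ⟨le_refl 0, lt_of_le_of_lt ht0 htT⟩
  set Φ : ℝ × ℝ → EuclideanSpace ℝ (Fin 2) := fun p => α p.1 p.2 with hΦdef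
  have hΦ : ContDiff ℝ ∞ Φ := hflow.smooth.of_le (by simp)
  have hΦd : Differentiable ℝ Φ := hΦ.differentiable (by simp)
  set a1 : ℝ × ℝ → EuclideanSpace ℝ (Fin 2) := fun p => fderiv ℝ Φ p (1, 0) with ha1def
  set a2 : ℝ × ℝ → EuclideanSpace ℝ (Fin 2) := fun p => fderiv ℝ Φ p (0, 1) with ha2def
  have hca1 : ContDiff ℝ ∞ a1 := contDiff_fderiv_apply hΦ _
  have hca2 : ContDiff ℝ ∞ a2 := contDiff_fderiv_apply hΦ _
  set c2 : ℝ × ℝ → EuclideanSpace ℝ (Fin 2) := fun p => fderiv ℝ a1 p (0, 1) with hc2def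
  set b2 : ℝ × ℝ → EuclideanSpace ℝ (Fin 2) := fun p => fderiv ℝ a2 p (1, 0) with hb2def
  have hcb : ∀ p, b2 p = c2 p := fun p => fderiv_swap2 hΦ p _ _
  have hcc2 : Continuous c2 := (contDiff_fderiv_apply hca1 _).continuous
  have hcb2 : Continuous b2 := (contDiff_fderiv_apply hca2 _).continuous
  have hderiv_eq : ∀ (τ u : ℝ), deriv (fun v => α v τ) u = a1 (u, τ) := fun τ u =>
    (hasDerivAt_slice_fst hΦd u τ).deriv
  set Ft : ℝ × ℝ → ℝ := fun p => cross2 (a2 p) (a1 p) + cross2 (Φ p) (c2 p) with hFtdef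
  have hFtc : Continuous Ft :=
    (continuous_cross2 hca2.continuous hca1.continuous).add
      (continuous_cross2 hΦ.continuous hcc2)
  -- FTC in the time variable
  have hstep : ∀ u : ℝ,
      cross2 (Φ (u, t)) (a1 (u, t)) - cross2 (Φ (u, 0)) (a1 (u, 0)) =
        ∫ s in (0:ℝ)..t, Ft (u, s) := by
    intro u
    have hder : ∀ s ∈ uIcc (0:ℝ) t, HasDerivAt (fun σ => cross2 (Φ (u, σ)) (a1 (u, σ)))
        (Ft (u, s)) s := by
      intro s _
      exact hasDerivAt_cross2 (hasDerivAt_slice_snd hΦd u s)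
        (hasDerivAt_slice_snd (hca1.differentiable (by simp)) u s)
    have hint : IntervalIntegrable (fun s => Ft (u, s)) MeasureTheory.volume 0 t :=
      (hFtc.comp (Continuous.prodMk_right u)).intervalIntegrable 0 t
    exact (intervalIntegral.integral_eq_sub_of_hasDerivAt hder hint).symm
  -- the space integral of `Ft` vanishes at each flow time
  have hinner : ∀ s ∈ Ico (0:ℝ) T, (∫ u in (-1:ℝ)..1, Ft (u, s)) = 0 := by
    intro s hs
    have hγs : ContDiff ℝ ∞ (fun u => α u s) := hΦ.comp (contDiff_id.prodMk contDiff_const)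
    have hreg := hflow.regular s hs
    have ha2val : ∀ u ∈ Icc (-1:ℝ) 1, a2 (u, s) =
        curvDeriv (fun v => α v s) 2 u • normalVec (fun v => α v s) u := by
      intro u hu
      exact HasDerivAt.unique (hasDerivAt_slice_snd hΦd u s) (hflow.flow s hs u hu)
    have hFTC1 : (∫ u in (-1:ℝ)..1, cross2 (a2 (u, s)) (a1 (u, s))) = 0 := by
      have hder : ∀ u ∈ uIcc (-1:ℝ) 1, HasDerivAt (curvDeriv (fun v => α v s) 1)
          (cross2 (a2 (u, s)) (a1 (u, s))) u := by
        intro u hu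
        rw [uIcc_of_le (by norm_num)] at hu
        have hne : deriv (fun v => α v s) u ≠ 0 := hreg u hu
        have hval : cross2 (a2 (u, s)) (a1 (u, s)) =
            deriv (curvDeriv (fun v => α v s) 1) u := by
          rw [ha2val u hu, cross2_smul_left, ← hderiv_eq s u,
            cross2_normal_deriv _ _ hne]
          have h2 : curvDeriv (fun v => α v s) 2 u =
              ‖deriv (fun v => α v s) u‖⁻¹ * deriv (curvDeriv (fun v => α v s) 1) u := rfl
          rw [h2]
          have hn : ‖deriv (fun v => α v s) u‖ ≠ 0 := norm_ne_zero_iff.2 hne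
          field_simp
        rw [hval]
        exact (curvDerivOne_differentiableAt hγs hne).hasDerivAt
      have hint : IntervalIntegrable (fun u => cross2 (a2 (u, s)) (a1 (u, s)))
          MeasureTheory.volume (-1) 1 :=
        (continuous_cross2 (hca2.continuous.comp (continuous_id.prodMk continuous_const))
          (hca1.continuous.comp (continuous_id.prodMk continuous_const))).intervalIntegrable _ _
      rw [intervalIntegral.integral_eq_sub_of_hasDerivAt hder hint]
      obtain ⟨hL, hR⟩ := hflow.noflux s hs
      rw [hL, hR, sub_zero]
    have hG : ∀ u : ℝ, HasDerivAt (fun v => cross2 (Φ (v, s)) (a2 (v, s)))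
        (cross2 (a1 (u, s)) (a2 (u, s)) + cross2 (Φ (u, s)) (b2 (u, s))) u := by
      intro u
      exact hasDerivAt_cross2 (hasDerivAt_slice_fst hΦd u s)
        (hasDerivAt_slice_fst (hca2.differentiable (by simp)) u s)
    have hGd_cont : Continuous fun u : ℝ =>
        cross2 (a1 (u, s)) (a2 (u, s)) + cross2 (Φ (u, s)) (b2 (u, s)) := by
      refine Continuous.add ?_ ?_
      · exact continuous_cross2 (hca1.continuous.comp (continuous_id.prodMk continuous_const))
          (hca2.continuous.comp (continuous_id.prodMk continuous_const))
      · exact continuous_cross2 (hΦ.continuous.comp (continuous_id.prodMk continuous_const))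
          (hcb2.comp (continuous_id.prodMk continuous_const))
    have hFTC2 : (∫ u in (-1:ℝ)..1,
        (cross2 (a1 (u, s)) (a2 (u, s)) + cross2 (Φ (u, s)) (b2 (u, s)))) =
        cross2 (Φ (1, s)) (a2 (1, s)) - cross2 (Φ (-1, s)) (a2 (-1, s)) :=
      intervalIntegral.integral_eq_sub_of_hasDerivAt (fun u _ => hG u)
        (hGd_cont.intervalIntegrable _ _)
    have hb1 : cross2 (Φ (1, s)) (a2 (1, s)) = 0 := by
      obtain ⟨ρ, hρ, heq⟩ := hflow.bdry_right s hs
      have hu1 : (1:ℝ) ∈ Icc (-1:ℝ) 1 := by norm_num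
      have hΦval : Φ (1, s) = ρ • coneDir θ₂ := heq
      rw [ha2val 1 hu1, hΦval, cross2_smul_left, cross2_smul_right, cross2_coneDir,
        hflow.neumann_right s hs]
      ring
    have hbm1 : cross2 (Φ (-1, s)) (a2 (-1, s)) = 0 := by
      obtain ⟨ρ, hρ, heq⟩ := hflow.bdry_left s hs
      have hu1 : (-1:ℝ) ∈ Icc (-1:ℝ) 1 := by norm_num
      have hΦval : Φ (-1, s) = ρ • coneDir θ₁ := heq
      rw [ha2val (-1) hu1, hΦval, cross2_smul_left, cross2_smul_right, cross2_coneDir,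
        hflow.neumann_left s hs]
      ring
    have hsplit : ∀ u : ℝ, Ft (u, s) =
        2 * cross2 (a2 (u, s)) (a1 (u, s)) +
          (cross2 (a1 (u, s)) (a2 (u, s)) + cross2 (Φ (u, s)) (b2 (u, s))) := by
      intro u
      have h1 := hcb (u, s)
      have h2 := cross2_skew (a1 (u, s)) (a2 (u, s))
      rw [hFtdef]
      simp only []
      rw [← h1]
      linarith
    calc (∫ u in (-1:ℝ)..1, Ft (u, s))
        = ∫ u in (-1:ℝ)..1, (2 * cross2 (a2 (u, s)) (a1 (u, s)) +
            (cross2 (a1 (u, s)) (a2 (u, s)) + cross2 (Φ (u, s)) (b2 (u, s)))) := by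
          apply intervalIntegral.integral_congr
          intro u _
          exact hsplit u
      _ = (∫ u in (-1:ℝ)..1, 2 * cross2 (a2 (u, s)) (a1 (u, s))) +
          ∫ u in (-1:ℝ)..1, (cross2 (a1 (u, s)) (a2 (u, s)) + cross2 (Φ (u, s)) (b2 (u, s))) := by
          apply intervalIntegral.integral_add
          · exact (continuous_const.mul (continuous_cross2
              (hca2.continuous.comp (continuous_id.prodMk continuous_const))
              (hca1.continuous.comp (continuous_id.prodMk continuous_const)))).intervalIntegrable _ _
          · exact hGd_cont.intervalIntegrable _ _
      _ = 0 := by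
          rw [intervalIntegral.integral_const_mul, hFTC1, hFTC2, hb1, hbm1]
          ring
  -- Fubini and conclusion
  have hint1 : IntervalIntegrable (fun u => cross2 (Φ (u, t)) (a1 (u, t)))
      MeasureTheory.volume (-1) 1 :=
    (continuous_cross2 (hΦ.continuous.comp (continuous_id.prodMk continuous_const))
      (hca1.continuous.comp (continuous_id.prodMk continuous_const))).intervalIntegrable _ _
  have hint0 : IntervalIntegrable (fun u => cross2 (Φ (u, 0)) (a1 (u, 0)))
      MeasureTheory.volume (-1) 1 :=
    (continuous_cross2 (hΦ.continuous.comp (continuous_id.prodMk continuous_const))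
      (hca1.continuous.comp (continuous_id.prodMk continuous_const))).intervalIntegrable _ _
  have hsub : (∫ u in (-1:ℝ)..1, cross2 (Φ (u, t)) (a1 (u, t))) -
      (∫ u in (-1:ℝ)..1, cross2 (Φ (u, 0)) (a1 (u, 0))) = 0 := by
    rw [← intervalIntegral.integral_sub hint1 hint0]
    have h1 : (∫ u in (-1:ℝ)..1,
        (cross2 (Φ (u, t)) (a1 (u, t)) - cross2 (Φ (u, 0)) (a1 (u, 0)))) =
        ∫ u in (-1:ℝ)..1, ∫ s in (0:ℝ)..t, Ft (u, s) := by
      apply intervalIntegral.integral_congr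
      intro u _
      exact hstep u
    rw [h1, interval_integral_swap2 (f := fun u s => Ft (u, s))
      (by exact hFtc) (by norm_num) ht0]
    rw [intervalIntegral.integral_congr (g := fun _ => (0:ℝ)) ?_,
      intervalIntegral.integral_zero]
    intro s hs'
    rw [uIcc_of_le ht0] at hs'
    exact hinner s ⟨hs'.1, lt_of_le_of_lt hs'.2 htT⟩
  have harea : ∀ τ, τ ∈ Ico (0:ℝ) T →
      enclosedArea (fun u => α u τ) =
        (1 / 2) * ∫ u in (-1:ℝ)..1, cross2 (Φ (u, τ)) (a1 (u, τ)) := by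
    intro τ hτ
    unfold enclosedArea curveIntegralDs
    congr 1
    apply intervalIntegral.integral_congr
    intro u hu
    rw [uIcc_of_le (by norm_num)] at hu
    have hne := hflow.regular τ hτ u hu
    have h := inner_normal_mul_norm (fun v => α v τ) u hne
    show (inner ℝ (α u τ) (normalVec (fun v => α v τ) u) : ℝ) * ‖deriv (fun v => α v τ) u‖ =
      cross2 (Φ (u, τ)) (a1 (u, τ))
    rw [show ((inner ℝ (α u τ) (normalVec (fun v => α v τ) u) : ℝ) * ‖deriv (fun v => α v τ) u‖ =
        cross2 (α u τ) (deriv (fun v => α v τ) u)) from h, hderiv_eq τ u]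
  rw [harea t ⟨ht0, htT⟩, harea 0 h0T, sub_eq_zero.mp hsub]

end
end
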